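/- arXiv:1905.07068 — 3 statements merged into one kernel-verified Lean document; each statement's English description precedes it below -/
import Mathlib

section
/- Let $p$ be a prime integer and $k$ a field of $\operatorname{char}(k) = p$. Let $F = k((\alpha))((\beta))$ be the field of iterated Laurent series in two indeterminates over $k$. Then the Artin–Schreier polynomial $x^p - x - \beta^{-1}$ has no root in $F$; equivalently, $F[x : x^p - x = \beta^{-1}]$ is a field extension of $F$ of degree $p$. -/
/-!
If `z ≠ 0` has order `v` in `K((β))`, then `z ^ p - z` has order `p * v < v` when `v < 0`,
and no terms of negative degree when `v ≥ 0`; either way it is not `β⁻¹`.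

For irreducibility of `X ^ p - X - a` without roots in `K`: any two roots in an algebraic closure
differ by an element of the prime field, since `(b - α) ^ p = b - α`. A monic factor of degree `d`
has the sum of its roots in `K`, and this sum is `d • α` plus a prime-field element; if
`0 < d < p` then `d` is invertible in `K`, which puts the root `α` in `K`.
-/

noncomputable def IterLaurentAux (k : Type) [Field k] : ℕ → (T : Type) × Field T
  | 0 => ⟨k, inferInstance⟩
  | n + 1 =>
      letI := (IterLaurentAux k n).2
      ⟨LaurentSeries (IterLaurentAux k n).1, inferInstance⟩

/-- The field of iterated Laurent series `k((α₁))…((αₙ))` in `n` indeterminates over `k`. -/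
noncomputable def IterLaurent (k : Type) [Field k] (n : ℕ) : Type :=
  (IterLaurentAux k n).1

noncomputable instance IterLaurent.instField (k : Type) [Field k] (n : ℕ) :
    Field (IterLaurent k n) :=
  (IterLaurentAux k n).2

/-- The indeterminates of `k((α₁))…((αₙ))`: `IterLaurent.var k n i` is `α_{i+1}`
(so `i = 0` gives the innermost variable `α₁` and `i = n-1` the outermost one `αₙ`). -/
noncomputable def IterLaurent.var (k : Type) [Field k] : ∀ n, Fin n → IterLaurent k n
  | n + 1, i =>
      Fin.lastCases
        (show IterLaurent k (n + 1) from
          (HahnSeries.single (1 : ℤ) (1 : IterLaurent k n) : LaurentSeries (IterLaurent k n)))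
        (fun j => show IterLaurent k (n + 1) from
          (HahnSeries.C (IterLaurent.var k n j) : LaurentSeries (IterLaurent k n)))
        i

open Polynomial

instance HahnSeries.charP {Γ R : Type*} [PartialOrder Γ] [AddCommMonoid Γ]
    [IsOrderedCancelAddMonoid Γ] [Semiring R] (p : ℕ) [CharP R p] : CharP (HahnSeries Γ R) p :=
  charP_of_injective_ringHom HahnSeries.C_injective p

theorem LaurentSeries.pow_sub_self_ne_single_neg_one {R : Type*} [CommRing R] [IsDomain R]
    {p : ℕ} (hp : 1 < p) (z : LaurentSeries R) :
    z ^ p - z ≠ HahnSeries.single (-1) 1 := by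
  intro h
  obtain rfl | hz := eq_or_ne z 0
  · rw [zero_pow (by omega), sub_zero] at h
    exact HahnSeries.single_ne_zero one_ne_zero h.symm
  have hord : (z ^ p).order = p * z.order := by simp [HahnSeries.order_pow]
  rcases lt_or_ge z.order 0 with hneg | hnonneg
  · have hlt : (p : ℤ) * z.order < z.order := by nlinarith
    have hne : (p : ℤ) * z.order ≠ -1 := by nlinarith
    have hcoeff := congr(($h).coeff ((p : ℤ) * z.order))
    rw [HahnSeries.coeff_sub, HahnSeries.coeff_eq_zero_of_lt_order hlt,
      HahnSeries.coeff_single_of_ne hne, sub_zero, ← hord, ← HahnSeries.leadingCoeff_eq]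
      at hcoeff
    exact HahnSeries.leadingCoeff_ne_zero.mpr (pow_ne_zero p hz) hcoeff
  · have hcoeff := congr(($h).coeff (-1))
    rw [HahnSeries.coeff_sub, HahnSeries.coeff_eq_zero_of_lt_order (x := z) (by omega),
      HahnSeries.coeff_eq_zero_of_lt_order (x := z ^ p) (by rw [hord]; nlinarith),
      HahnSeries.coeff_single_same, sub_zero] at hcoeff
    exact zero_ne_one hcoeff

section ArtinSchreier

variable {K L : Type*} [Field K] [Field L] {p : ℕ}

theorem sub_mem_bot_of_pow_sub_self_eq [Fact p.Prime] [CharP L p] {a b : L}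
    (h : a ^ p - a = b ^ p - b) : a - b ∈ (⊥ : Subfield L) := by
  rw [Subfield.mem_bot_iff_pow_eq_self L p, sub_pow_char]
  linear_combination h

theorem natDegree_X_pow_sub_X_sub_C (hp : 1 < p) (a : K) : (X ^ p - X - C a).natDegree = p := by
  rw [sub_sub, natDegree_sub_eq_left_of_natDegree_lt (by rwa [natDegree_X_add_C, natDegree_X_pow]),
    natDegree_X_pow]

theorem monic_X_pow_sub_X_sub_C (hp : 1 < p) (a : K) : (X ^ p - X - C a).Monic := by
  rw [sub_sub]
  exact monic_X_pow_sub (by rw [degree_X_add_C]; exact_mod_cast hp)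

theorem natDegree_nsmul_mem_fieldRange {f : K →+* L} {g : K[X]} (hg : g.Monic)
    (hsplit : (g.map f).Splits) {α : L}
    (hroots : ∀ b ∈ (g.map f).roots, b - α ∈ (⊥ : Subfield L)) :
    g.natDegree • α ∈ f.fieldRange := by
  set roots := (g.map f).roots
  have hsum : roots.sum ∈ f.fieldRange := by
    rw [← neg_neg roots.sum, ← hsplit.nextCoeff_eq_neg_sum_roots_of_monic (hg.map f),
      nextCoeff_map f.injective]
    exact neg_mem (f.mem_fieldRange_self _)
  have hdiff : (roots.map (· - α)).sum ∈ f.fieldRange :=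
    bot_le (a := f.fieldRange) (Subfield.multiset_sum_mem _ _ (by simpa using hroots))
  have hcard : roots.card = g.natDegree := by
    rw [← hsplit.natDegree_eq_card_roots, natDegree_map]
  have hnsmul : g.natDegree • α = roots.sum - (roots.map (· - α)).sum := by
    rw [Multiset.sum_map_sub, Multiset.map_id', Multiset.map_const', Multiset.sum_replicate, hcard,
      sub_sub_cancel]
  exact hnsmul ▸ sub_mem hsum hdiff

theorem X_pow_sub_X_sub_C_irreducible [Fact p.Prime] [CharP K p] {a : K}
    (ha : ∀ z : K, z ^ p - z ≠ a) : Irreducible (X ^ p - X - C a) := by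
  have hp : 1 < p := (Fact.out : p.Prime).one_lt
  set f : K[X] := X ^ p - X - C a
  let ι := algebraMap K (AlgebraicClosure K)
  obtain ⟨α, hα⟩ := IsAlgClosed.exists_aeval_eq_zero (AlgebraicClosure K) f <| by
    rw [degree_eq_natDegree (monic_X_pow_sub_X_sub_C hp a).ne_zero, natDegree_X_pow_sub_X_sub_C hp]
    exact_mod_cast (by omega : p ≠ 0)
  have hα_root : α ^ p - α = ι a := by simpa [f, sub_eq_zero] using hα
  have hint : IsIntegral K α := ⟨f, monic_X_pow_sub_X_sub_C hp a, hα⟩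
  set g := minpoly K α
  have hdvd : g ∣ f := minpoly.dvd K α hα
  have hroots : ∀ b ∈ (g.map ι).roots, b - α ∈ (⊥ : Subfield (AlgebraicClosure K)) := by
    intro b hb
    have hb_root : aeval b f = 0 := aeval_eq_zero_of_dvd_aeval_eq_zero hdvd <| by
      rw [aeval_def, eval₂_eq_eval_map, ← IsRoot]
      exact isRoot_of_mem_roots hb
    apply sub_mem_bot_of_pow_sub_self_eq
    rw [hα_root]
    simpa [f, sub_eq_zero] using hb_root
  obtain ⟨y, hy⟩ :=
    natDegree_nsmul_mem_fieldRange (minpoly.monic hint) (IsAlgClosed.splits _) hroots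
  have hp_le : p ≤ g.natDegree := by
    by_contra! hlt
    have hd : (g.natDegree : K) ≠ 0 := by
      rw [Ne, CharP.cast_eq_zero_iff K p]
      exact Nat.not_dvd_of_pos_of_lt (minpoly.natDegree_pos hint) hlt
    have hy_div : ι (y / g.natDegree) = α := by
      have hdι : (g.natDegree : AlgebraicClosure K) ≠ 0 := by
        rwa [← map_natCast ι, _root_.map_ne_zero]
      rw [map_div₀, hy, map_natCast, nsmul_eq_mul, mul_div_cancel_left₀ _ hdι]
    exact ha (y / g.natDegree) (ι.injective (by rw [map_sub, map_pow, hy_div, hα_root]))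
  have hfg : f = g := eq_of_monic_of_dvd_of_natDegree_le (minpoly.monic hint)
    (monic_X_pow_sub_X_sub_C hp a) hdvd (by rwa [natDegree_X_pow_sub_X_sub_C hp])
  exact hfg ▸ minpoly.irreducible hint

end ArtinSchreier

/-- Let `p` be prime and `k` a field of characteristic `p`. In the field
`F = k((α))((β))` of iterated Laurent series in two indeterminates, the Artin–Schreier
polynomial `x^p - x - β⁻¹` has no root; equivalently, it is irreducible over `F`, so that
`F[x : x^p - x = β⁻¹]` is a field extension of `F` of degree `p`. -/
theorem iterLaurent_artinSchreier_no_root (p : ℕ) (hp : p.Prime) (k : Type) [Field k]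
    [CharP k p] :
    (¬ ∃ z : IterLaurent k 2, z ^ p - z = (IterLaurent.var k 2 1)⁻¹) ∧
    Irreducible (Polynomial.X ^ p - Polynomial.X -
      Polynomial.C (IterLaurent.var k 2 1)⁻¹ : Polynomial (IterLaurent k 2)) := by
  have : Fact p.Prime := ⟨hp⟩
  have : CharP (IterLaurent k 2) p :=
    (inferInstance : CharP (LaurentSeries (LaurentSeries k)) p)
  have hvar : (IterLaurent.var k 2 1)⁻¹ =
      (HahnSeries.single (-1 : ℤ) (1 : IterLaurent k 1) : LaurentSeries (IterLaurent k 1)) :=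
    (HahnSeries.inv_single (1 : ℤ) (1 : IterLaurent k 1)).trans (congrArg _ inv_one)
  have hno_root : ∀ z : IterLaurent k 2, z ^ p - z ≠ (IterLaurent.var k 2 1)⁻¹ := fun z => by
    rw [hvar]; exact LaurentSeries.pow_sub_self_ne_single_neg_one (R := IterLaurent k 1) hp.one_lt z
  exact ⟨not_exists.mpr hno_root, X_pow_sub_X_sub_C_irreducible hno_root⟩
end

section
/- Let $k$ be a field of $\operatorname{char}(k) = 2$, $n \geq 2$, and $F = k((\alpha_1))\dots((\alpha_{n+1}))$ the field of iterated Laurent series in $n+1$ indeterminates over $k$. Let $\varphi = \langle\!\langle \alpha_1,\dots,\alpha_{n-2},\alpha_{n-1},\alpha_n^{-1}]]$ and $\psi = \langle\!\langle \alpha_1,\dots,\alpha_{n-2},\alpha_n,\alpha_{n+1}^{-1}]]$. Then the orthogonal sum $\varphi \perp \psi$ is Witt equivalent to $\omega = \langle\!\langle \alpha_1,\dots,\alpha_{n-2}\rangle\!\rangle \otimes [1, \alpha_n^{-1}+\alpha_{n+1}^{-1}] \perp \alpha_{n-1}\,\langle\!\langle \alpha_1,\dots,\alpha_{n-2}\rangle\!\rangle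 \otimes [1, \alpha_n^{-1}] \perp \alpha_n\,\langle\!\langle \alpha_1,\dots,\alpha_{n-2}\rangle\!\rangle \otimes [1, \alpha_{n+1}^{-1}]$. -/
/-- The quadratic form `v ↦ ∑ i j, M i j * v i * v j` on `ι → F` given by a matrix `M`. -/
noncomputable def quadOfMatrix (F : Type) [Field F] {ι : Type} [Fintype ι] [DecidableEq ι]
    (M : Matrix ι ι F) : QuadraticForm F (ι → F) :=
  LinearMap.BilinMap.toQuadraticMap (Matrix.toLinearMap₂' F M)

/-- The (diagonal) Gram matrix of the bilinear `m`-fold Pfister form `⟨⟨a₁,…,aₘ⟩⟩`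
(characteristic `2`), indexed by `e : Fin m → Bool`, with diagonal entries the
monomials `∏ aᵢ^{eᵢ}`. -/
noncomputable def pfisterMatrix (F : Type) [Field F] {m : ℕ} (a : Fin m → F) :
    Matrix (Fin m → Bool) (Fin m → Bool) F :=
  Matrix.diagonal fun e => ∏ i, if e i then a i else 1

/-- Matrix of the binary quadratic form `[a,b] : (x,y) ↦ a x² + x y + b y²`. -/
def binaryMatrix (F : Type) [Field F] (a b : F) : Matrix Bool Bool F :=
  fun i j =>
    match i, j with
    | false, false => a
    | false, true => 1
    | true, false => 0
    | true, true => b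

/-- Matrix of the quadratic `(m+1)`-fold Pfister form `⟨⟨a₁,…,aₘ, b]] = ⟨⟨a₁,…,aₘ⟩⟩ ⊗ [1,b]`
in characteristic `2`. -/
noncomputable def quadPfisterMatrix (F : Type) [Field F] {m : ℕ} (a : Fin m → F) (b : F) :
    Matrix ((Fin m → Bool) × Bool) ((Fin m → Bool) × Bool) F :=
  Matrix.kroneckerMap (· * ·) (pfisterMatrix F a) (binaryMatrix F 1 b)

/-- The quadratic `(m+1)`-fold Pfister form `⟨⟨a₁,…,aₘ, b]]` in characteristic `2`. -/
noncomputable def quadPfister (F : Type) [Field F] {m : ℕ} (a : Fin m → F) (b : F) :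
    QuadraticForm F (((Fin m → Bool) × Bool) → F) :=
  quadOfMatrix F (quadPfisterMatrix F a b)

/-- Matrix of the hyperbolic quadratic form of rank `k`:
`v ↦ ∑ i, v (i, false) * v (i, true)`. -/
def hypMatrix (F : Type) [Field F] (k : ℕ) : Matrix (Fin k × Bool) (Fin k × Bool) F :=
  fun x y => if x.1 = y.1 ∧ x.2 = false ∧ y.2 = true then 1 else 0

/-- Witt equivalence of quadratic forms: the two forms become isometric after adding
suitable hyperbolic forms. -/
def WittEquivalent (F : Type) [Field F] {V₁ V₂ : Type} [AddCommGroup V₁] [Module F V₁]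
    [AddCommGroup V₂] [Module F V₂] (q₁ : QuadraticForm F V₁) (q₂ : QuadraticForm F V₂) :
    Prop :=
  ∃ k l : ℕ, QuadraticMap.Equivalent
    (q₁.prod (quadOfMatrix F (hypMatrix F k))) (q₂.prod (quadOfMatrix F (hypMatrix F l)))

/-- The symmetric bilinear form given by the matrix `M` is anisotropic:
`vᵀ M v ≠ 0` for all `v ≠ 0`. -/
def Matrix.BilinAnisotropic {F : Type} [Field F] {ι : Type} [Fintype ι]
    (M : Matrix ι ι F) : Prop :=
  ∀ v : ι → F, v ≠ 0 → dotProduct v (M.mulVec v) ≠ 0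

/-- The bilinear forms given by the matrices `M` and `N` are isometric:
`N = Pᵀ M P` for some invertible matrix `P`. -/
def Matrix.BilinIsometric {F : Type} [Field F] {ι : Type} [Fintype ι] [DecidableEq ι]
    (M N : Matrix ι ι F) : Prop :=
  ∃ P : Matrix ι ι F, IsUnit P.det ∧ N = P.transpose * M * P

/-!
Splitting off the last slot, `⟨⟨a, c⟩⟩ ⊗ [1, b] ≅ π_b ⊥ c π_b` with `π_b = ⟨⟨a⟩⟩ ⊗ [1, b]`, so
`φ ⊥ ψ ≅ (π_t ⊥ π_s) ⊥ α_{n-1} π_t ⊥ α_n π_s` for `t = αₙ⁻¹`, `s = α_{n+1}⁻¹`. In characteristic `2`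
one has `[1, t] ⊥ [1, s] ≅ [1, t + s] ⊥ [0, 0]`; scaling by each (nonzero) diagonal entry of the
bilinear Pfister form `⟨⟨a⟩⟩` gives `π_t ⊥ π_s ≅ π_{t+s} ⊥ 2^{n-2} ℍ`, and the hyperbolic part is
Witt-trivial.
-/

namespace QuadraticMap

section Generic

variable {R : Type*} [CommSemiring R] {M₁ M₂ M₃ M₄ N : Type*}
  [AddCommMonoid M₁] [AddCommMonoid M₂] [AddCommMonoid M₃] [AddCommMonoid M₄] [AddCommMonoid N]
  [Module R M₁] [Module R M₂] [Module R M₃] [Module R M₄] [Module R N]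

theorem Equivalent.prod_unique [Unique M₂] (Q₁ : QuadraticMap R M₁ N) (Q₂ : QuadraticMap R M₂ N) :
    (Q₁.prod Q₂).Equivalent Q₁ :=
  ⟨{ toLinearEquiv := LinearEquiv.prodUnique
     map_app' := fun x => by simp [Subsingleton.elim x.2 0] }⟩

theorem Equivalent.prod_prod_prod_rotate (Q₁ : QuadraticMap R M₁ N) (Q₂ : QuadraticMap R M₂ N)
    (Q₃ : QuadraticMap R M₃ N) (Q₄ : QuadraticMap R M₄ N) :
    ((Q₁.prod Q₂).prod (Q₃.prod Q₄)).Equivalent (((Q₁.prod Q₃).prod Q₄).prod Q₂) :=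
  ⟨{ toFun := fun x => (((x.1.1, x.2.1), x.2.2), x.1.2)
     invFun := fun y => ((y.1.1.1, y.2), (y.1.1.2, y.1.2))
     map_add' := fun _ _ => rfl
     map_smul' := fun _ _ => rfl
     left_inv := fun _ => rfl
     right_inv := fun _ => rfl
     map_app' := fun x => by simp only [prod_apply]; abel }⟩

theorem Equivalent.smul {Q₁ : QuadraticMap R M₁ R} {Q₂ : QuadraticMap R M₂ R}
    (h : Q₁.Equivalent Q₂) (c : R) : (c • Q₁).Equivalent (c • Q₂) :=
  let ⟨f⟩ := h
  ⟨{ toLinearEquiv := f.toLinearEquiv, map_app' := fun x => by simp [f.map_app] }⟩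

theorem smul_prod (c : R) (Q₁ : QuadraticMap R M₁ R) (Q₂ : QuadraticMap R M₂ R) :
    c • Q₁.prod Q₂ = (c • Q₁).prod (c • Q₂) := by
  ext x
  simp [mul_add]

variable {ι κ : Type*} [Fintype ι] [Fintype κ] {Mᵢ Nᵢ : ι → Type*}
  [∀ i, AddCommMonoid (Mᵢ i)] [∀ i, AddCommMonoid (Nᵢ i)] [∀ i, Module R (Mᵢ i)]
  [∀ i, Module R (Nᵢ i)]

theorem smul_pi (c : R) (Q : ∀ i, QuadraticMap R (Mᵢ i) R) : c • pi Q = pi fun i => c • Q i := by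
  ext x
  simp [pi_apply, Finset.mul_sum]

theorem Equivalent.pi_prod (Q₁ : ∀ i, QuadraticMap R (Mᵢ i) N) (Q₂ : ∀ i, QuadraticMap R (Nᵢ i) N) :
    ((QuadraticMap.pi Q₁).prod (QuadraticMap.pi Q₂)).Equivalent
      (QuadraticMap.pi fun i => (Q₁ i).prod (Q₂ i)) :=
  ⟨{ toFun := fun x i => (x.1 i, x.2 i)
     invFun := fun y => (fun i => (y i).1, fun i => (y i).2)
     map_add' := fun _ _ => rfl
     map_smul' := fun _ _ => rfl
     left_inv := fun _ => rfl
     right_inv := fun _ => rfl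
     map_app' := fun x => by simp [pi_apply, Finset.sum_add_distrib] }⟩

theorem Equivalent.pi_comp_equiv (Q : ∀ i, QuadraticMap R (Mᵢ i) N) (e : κ ≃ ι) :
    (QuadraticMap.pi fun k => Q (e k)).Equivalent (QuadraticMap.pi Q) :=
  ⟨{ toLinearEquiv := LinearEquiv.piCongrLeft R Mᵢ e
     map_app' := fun x => by
       simp only [pi_apply]
       exact (Fintype.sum_equiv e _ _ fun k => by
         rw [← Equiv.piCongrLeft_apply_apply Mᵢ e x k]; rfl).symm }⟩

theorem Equivalent.pi_sum {κ' : Type*} [Fintype κ'] (Q : ∀ i, QuadraticMap R (Mᵢ i) N)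
    (e : κ ⊕ κ' ≃ ι) :
    (QuadraticMap.pi Q).Equivalent
      ((QuadraticMap.pi fun k => Q (e (.inl k))).prod (QuadraticMap.pi fun k => Q (e (.inr k)))) :=
  (Equivalent.pi_comp_equiv Q e).symm.trans
    ⟨{ toLinearEquiv := LinearEquiv.sumPiEquivProdPi R κ κ' fun s => Mᵢ (e s)
       map_app' := fun x => by simp [pi_apply, Fintype.sum_sum_type] }⟩

theorem Equivalent.pi_finSnoc {m : ℕ} (Q : (Fin (m + 1) → Bool) → QuadraticMap R M₁ N) :
    (QuadraticMap.pi Q).Equivalent ((QuadraticMap.pi fun e => Q (Fin.snoc e false)).prod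
      (QuadraticMap.pi fun e => Q (Fin.snoc e true))) :=
  Equivalent.pi_sum Q ((Equiv.boolProdEquivSum _).symm.trans (Fin.snocEquiv fun _ => Bool))

end Generic

end QuadraticMap

section MatrixForms

open QuadraticMap

variable {F : Type} [Field F]

theorem quadOfMatrix_apply {ι : Type} [Fintype ι] [DecidableEq ι] (M : Matrix ι ι F)
    (v : ι → F) : quadOfMatrix F M v = ∑ i, ∑ j, v i * M i j * v j := by
  simp only [quadOfMatrix, LinearMap.BilinMap.toQuadraticMap_apply, Matrix.toLinearMap₂'_apply,
    smul_eq_mul]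
  exact Fintype.sum_congr _ _ fun i => Fintype.sum_congr _ _ fun j => by ring

theorem quadOfMatrix_smul {ι : Type} [Fintype ι] [DecidableEq ι] (c : F) (M : Matrix ι ι F) :
    quadOfMatrix F (c • M) = c • quadOfMatrix F M := by
  ext v
  simp only [quadOfMatrix_apply, smul_apply, Matrix.smul_apply, smul_eq_mul, Finset.mul_sum]
  exact Fintype.sum_congr _ _ fun i => Fintype.sum_congr _ _ fun j => by ring

variable (F) in
noncomputable abbrev binaryForm (a b : F) : QuadraticForm F (Bool → F) :=
  quadOfMatrix F (binaryMatrix F a b)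

theorem binaryForm_apply (a b : F) (x : Bool → F) :
    binaryForm F a b x = a * x false ^ 2 + x false * x true + b * x true ^ 2 := by
  simp only [quadOfMatrix_apply, Fintype.sum_bool, binaryMatrix]
  ring

theorem quadOfMatrix_kroneckerMap_diagonal_equivalent {ι κ : Type} [Fintype ι] [DecidableEq ι]
    [Fintype κ] [DecidableEq κ] (d : ι → F) (B : Matrix κ κ F) :
    (quadOfMatrix F (Matrix.kroneckerMap (· * ·) (Matrix.diagonal d) B)).Equivalent
      (QuadraticMap.pi fun i => d i • quadOfMatrix F B) :=
  ⟨{ toLinearEquiv := LinearEquiv.curry F F ι κ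
     map_app' := fun v => by
       simp only [AddHom.toFun_eq_coe, LinearMap.coe_toAddHom, LinearEquiv.coe_coe,
         LinearEquiv.coe_curry, pi_apply, smul_apply, quadOfMatrix_apply, Function.curry_apply,
         smul_eq_mul, Finset.mul_sum, Matrix.kroneckerMap_apply, Matrix.diagonal_apply, ite_mul,
         zero_mul, mul_ite, mul_zero, Fintype.sum_prod_type, Finset.sum_ite_irrel,
         Finset.sum_const_zero, Finset.sum_ite_eq, Finset.mem_univ, if_true]
       exact Fintype.sum_congr _ _ fun i => Fintype.sum_congr _ _ fun k =>
         Fintype.sum_congr _ _ fun l => by ring }⟩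

theorem hypMatrix_eq_kroneckerMap (k : ℕ) :
    hypMatrix F k =
      Matrix.kroneckerMap (· * ·) (1 : Matrix (Fin k) (Fin k) F) (binaryMatrix F 0 0) := by
  ext ⟨i, a⟩ ⟨j, b⟩
  cases a <;> cases b <;> simp [hypMatrix, binaryMatrix, Matrix.one_apply]

theorem quadOfMatrix_hypMatrix_equivalent (k : ℕ) :
    (quadOfMatrix F (hypMatrix F k)).Equivalent
      (QuadraticMap.pi fun _ : Fin k => binaryForm F 0 0) := by
  simpa only [hypMatrix_eq_kroneckerMap, ← Matrix.diagonal_one, one_smul] using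
    quadOfMatrix_kroneckerMap_diagonal_equivalent (fun _ : Fin k => (1 : F)) (binaryMatrix F 0 0)

end MatrixForms

section BinaryForms

open QuadraticMap

variable {F : Type} [Field F]

theorem binaryForm_prod_binaryForm_equivalent [CharP F 2] (t s : F) :
    ((binaryForm F 1 t).prod (binaryForm F 1 s)).Equivalent
      ((binaryForm F 1 (t + s)).prod (binaryForm F 0 0)) := by
  -- `(z, h) ↦ (z + (w, 0), (w, z₁ + h₁))` with `w = h₀ + s h₁`: all cross terms come in pairs.
  refine Equivalent.symm
    ⟨{ toFun := fun v => (fun i => if i then v.1 true else v.1 false + v.2 false + s * v.2 true,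
          fun i => if i then v.1 true + v.2 true else v.2 false + s * v.2 true)
       invFun := fun w => (fun i => if i then w.1 true else w.1 false - w.2 false,
          fun i => if i then w.2 true - w.1 true else w.2 false - s * (w.2 true - w.1 true))
       map_add' := fun v v' => by ext i <;> cases i <;> simp <;> ring
       map_smul' := fun c v => by ext i <;> cases i <;> simp <;> ring
       left_inv := fun v => by ext i <;> cases i <;> simp
       right_inv := fun w => by ext i <;> cases i <;> simp
       map_app' := fun v => ?_ }⟩
  simp only [prod_apply, binaryForm_apply, if_true, Bool.false_eq_true, if_false, one_mul, zero_mul,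
    zero_add, add_zero]
  linear_combination (v.1 false * (v.2 false + s * v.2 true) + (v.2 false + s * v.2 true) ^ 2 +
    (v.2 false + s * v.2 true) * v.1 true + s * v.1 true * v.2 true + s * v.2 true ^ 2) *
    (CharTwo.two_eq_zero : (2 : F) = 0)

theorem smul_binaryForm_zero_zero_equivalent {d : F} (hd : d ≠ 0) :
    (d • binaryForm F 0 0).Equivalent (binaryForm F 0 0) :=
  ⟨{ toFun := fun x i => if i then x true else d * x false
     invFun := fun y i => if i then y true else d⁻¹ * y false
     map_add' := fun x x' => by ext i; cases i <;> simp; ring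
     map_smul' := fun c x => by ext i; cases i <;> simp; ring
     left_inv := fun x => by ext i; cases i <;> simp [hd]
     right_inv := fun y => by ext i; cases i <;> simp [hd]
     map_app' := fun x => by simp [binaryForm_apply, mul_assoc] }⟩

theorem smul_binaryForm_prod_binaryForm_equivalent [CharP F 2] {d : F} (hd : d ≠ 0) (t s : F) :
    ((d • binaryForm F 1 t).prod (d • binaryForm F 1 s)).Equivalent
      ((d • binaryForm F 1 (t + s)).prod (binaryForm F 0 0)) := by
  rw [← smul_prod]
  refine ((binaryForm_prod_binaryForm_equivalent t s).smul d).trans ?_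
  rw [smul_prod]
  exact (Equivalent.refl _).prod (smul_binaryForm_zero_zero_equivalent hd)

end BinaryForms

section PfisterForms

open QuadraticMap

variable {F : Type} [Field F] {m : ℕ}

theorem quadPfister_equivalent_pi (a : Fin m → F) (b : F) :
    (quadPfister F a b).Equivalent
      (QuadraticMap.pi fun e : Fin m → Bool => (∏ i, if e i then a i else 1) • binaryForm F 1 b) :=
  quadOfMatrix_kroneckerMap_diagonal_equivalent _ _

theorem prod_ite_snoc (a : Fin m → F) (c : F) (e : Fin m → Bool) (x : Bool) :
    (∏ i, if (Fin.snoc e x : Fin (m + 1) → Bool) i then (Fin.snoc a c : Fin (m + 1) → F) i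
      else 1) =
      (∏ i, if e i then a i else 1) * if x then c else 1 := by
  simp [Fin.prod_univ_castSucc]

theorem quadPfister_snoc_equivalent (a : Fin m → F) (c b : F) :
    (quadPfister F (Fin.snoc a c) b).Equivalent
      ((quadPfister F a b).prod (c • quadPfister F a b)) := by
  refine (quadPfister_equivalent_pi _ b).trans ((Equivalent.pi_finSnoc _).trans ?_)
  simp only [prod_ite_snoc, if_true, Bool.false_eq_true, if_false, mul_one, mul_comm _ c, mul_smul,
    ← QuadraticMap.smul_pi]
  exact (quadPfister_equivalent_pi a b).symm.prod ((quadPfister_equivalent_pi a b).symm.smul c)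

theorem quadPfister_prod_quadPfister_equivalent [CharP F 2] {a : Fin m → F} (ha : ∀ i, a i ≠ 0)
    (t s : F) :
    ((quadPfister F a t).prod (quadPfister F a s)).Equivalent
      ((quadPfister F a (t + s)).prod (quadOfMatrix F (hypMatrix F (2 ^ m)))) := by
  have hd (e : Fin m → Bool) : (∏ i, if e i then a i else 1) ≠ 0 :=
    Finset.prod_ne_zero_iff.2 fun i _ => by split_ifs <;> simp [ha i]
  have hyp : (QuadraticMap.pi fun _ : Fin m → Bool => binaryForm F 0 0).Equivalent
      (quadOfMatrix F (hypMatrix F (2 ^ m))) :=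
    (Equivalent.pi_comp_equiv _ (Fintype.equivFinOfCardEq (by simp))).trans
      (quadOfMatrix_hypMatrix_equivalent _).symm
  exact ((quadPfister_equivalent_pi a t).prod (quadPfister_equivalent_pi a s)).trans <|
    (Equivalent.pi_prod _ _).trans <|
    (Equivalent.pi fun e => smul_binaryForm_prod_binaryForm_equivalent (hd e) t s).trans <|
    (Equivalent.pi_prod _ _).symm.trans <|
    (quadPfister_equivalent_pi a (t + s)).symm.prod hyp

end PfisterForms

theorem wittEquivalent_of_equivalent_prod_hyp {F : Type} [Field F] {V₁ V₂ : Type}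
    [AddCommGroup V₁] [Module F V₁] [AddCommGroup V₂] [Module F V₂] {q₁ : QuadraticForm F V₁}
    {q₂ : QuadraticForm F V₂} {l : ℕ}
    (h : q₁.Equivalent (q₂.prod (quadOfMatrix F (hypMatrix F l)))) : WittEquivalent F q₁ q₂ :=
  ⟨0, l, (QuadraticMap.Equivalent.prod_unique _ _).trans h⟩

namespace IterLaurent

variable (k : Type) [Field k]

theorem var_ne_zero : ∀ (n : ℕ) (i : Fin n), var k n i ≠ 0
  | n + 1, i => by
    induction i using Fin.lastCases with
    | last =>
      rw [var, Fin.lastCases_last]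
      exact HahnSeries.single_ne_zero one_ne_zero
    | cast j =>
      rw [var, Fin.lastCases_castSucc]
      exact HahnSeries.C_ne_zero (var_ne_zero n j)

theorem charP (p : ℕ) [CharP k p] : ∀ n, CharP (IterLaurent k n) p
  | 0 => ‹CharP k p›
  | n + 1 =>
    have := charP p n
    charP_of_injective_ringHom (HahnSeries.C_injective (Γ := ℤ) (R := IterLaurent k n)) p

end IterLaurent

/-- Let `k` be a field of characteristic `2`, `n = m+2 ≥ 2`, and
`F = k((α₁))…((α_{n+1}))`. Let `φ = ⟨⟨α₁,…,α_{n-1}, αₙ⁻¹]]` and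
`ψ = ⟨⟨α₁,…,α_{n-2}, αₙ, α_{n+1}⁻¹]]`. Then `φ ⊥ ψ` is Witt equivalent to
`ω = ⟨⟨α₁,…,α_{n-2}⟩⟩ ⊗ [1, αₙ⁻¹ + α_{n+1}⁻¹] ⊥ α_{n-1} ⟨⟨α₁,…,α_{n-2}⟩⟩ ⊗ [1, αₙ⁻¹]
⊥ αₙ ⟨⟨α₁,…,α_{n-2}⟩⟩ ⊗ [1, α_{n+1}⁻¹]`. -/
theorem iterLaurent_phi_psi_wittEquivalent_omega (k : Type) [Field k] [CharP k 2]
    (m : ℕ) :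
    WittEquivalent (IterLaurent k (m + 3))
      ((quadPfister (IterLaurent k (m + 3))
          (Fin.snoc (fun i : Fin m => IterLaurent.var k (m + 3) (Fin.castLE (by omega) i))
            (IterLaurent.var k (m + 3) ⟨m, by omega⟩))
          (IterLaurent.var k (m + 3) ⟨m + 1, by omega⟩)⁻¹).prod
       (quadPfister (IterLaurent k (m + 3))
          (Fin.snoc (fun i : Fin m => IterLaurent.var k (m + 3) (Fin.castLE (by omega) i))
            (IterLaurent.var k (m + 3) ⟨m + 1, by omega⟩))
          (IterLaurent.var k (m + 3) ⟨m + 2, by omega⟩)⁻¹))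
      (((quadOfMatrix (IterLaurent k (m + 3))
          (quadPfisterMatrix (IterLaurent k (m + 3))
            (fun i : Fin m => IterLaurent.var k (m + 3) (Fin.castLE (by omega) i))
            ((IterLaurent.var k (m + 3) ⟨m + 1, by omega⟩)⁻¹ +
              (IterLaurent.var k (m + 3) ⟨m + 2, by omega⟩)⁻¹))).prod
        (quadOfMatrix (IterLaurent k (m + 3))
          (IterLaurent.var k (m + 3) ⟨m, by omega⟩ •
            quadPfisterMatrix (IterLaurent k (m + 3))
              (fun i : Fin m => IterLaurent.var k (m + 3) (Fin.castLE (by omega) i))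
              (IterLaurent.var k (m + 3) ⟨m + 1, by omega⟩)⁻¹))).prod
       (quadOfMatrix (IterLaurent k (m + 3))
          (IterLaurent.var k (m + 3) ⟨m + 1, by omega⟩ •
            quadPfisterMatrix (IterLaurent k (m + 3))
              (fun i : Fin m => IterLaurent.var k (m + 3) (Fin.castLE (by omega) i))
              (IterLaurent.var k (m + 3) ⟨m + 2, by omega⟩)⁻¹))) := by
  have := IterLaurent.charP k 2 (m + 3)
  rw [quadOfMatrix_smul, quadOfMatrix_smul]
  refine wittEquivalent_of_equivalent_prod_hyp (l := 2 ^ m) <|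
    ((quadPfister_snoc_equivalent _ _ _).prod (quadPfister_snoc_equivalent _ _ _)).trans <|
    .trans ⟨QuadraticMap.IsometryEquiv.prodProdProdComm _ _ _ _⟩ ?_
  exact ((quadPfister_prod_quadPfister_equivalent (fun _ => IterLaurent.var_ne_zero k _ _) _ _).prod
    (.refl _)).trans (QuadraticMap.Equivalent.prod_prod_prod_rotate _ _ _ _)
end

section
/- Let $F$ be a field of $\operatorname{char}(F) = 2$ and $n \geq 2$. If the $2$-rank of $F$ is at least $n+1$, i.e., $[F : F^2] \geq 2^{n+1}$, then $I^n F$ is not linked: there exist two anisotropic bilinear $n$-fold Pfister forms over $F$ that do not share a common $(n-1)$-fold Pfister factor. -/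
/-- The `2^m` monomials `∏ uᵢ^{eᵢ}`, `e ∈ {0,1}^m`, are linearly independent over the
subfield `F² = {x² : x ∈ F}`; equivalently, `1, u₁, …, uₘ` generate over `F²` a subfield
of degree `2^m` of `F`. In particular the existence of such a tuple of length `m` says
exactly that `[F : F²] ≥ 2^m`. -/
def TwoIndependent (F : Type) [Field F] {m : ℕ} (u : Fin m → F) : Prop :=
  ∀ c : (Fin m → Bool) → F,
    (∑ e : Fin m → Bool, c e ^ 2 * ∏ i, if e i then u i else 1) = 0 → ∀ e, c e = 0


theorem LinearMap.BilinForm.eq_zero_of_linearIndependent {K V ι : Type*} [Field K]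
    [AddCommGroup V] [Module K V] [FiniteDimensional K V] [Fintype ι]
    {B : LinearMap.BilinForm K V} {v : ι → V} (hv : LinearIndependent K v)
    (hcard : Fintype.card ι = Module.finrank K V) (h : ∀ i j, B (v i) (v j) = 0) : B = 0 :=
  LinearMap.BilinForm.ext_basis (basisOfLinearIndependentOfCardEqFinrank' v hv hcard)
    (by simpa using h)

theorem Matrix.BilinIsometric.exists_linearIndependent {F : Type} [Field F] {ι : Type}
    [Fintype ι] [DecidableEq ι] {M N : Matrix ι ι F} (h : M.BilinIsometric N) :
    ∃ v : ι → ι → F, LinearIndependent F v ∧ ∀ i j, M.toBilin' (v i) (v j) = N i j := by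
  obtain ⟨P, hP, rfl⟩ := h
  refine ⟨P.col, Matrix.linearIndependent_cols_of_isUnit ((P.isUnit_iff_isUnit_det).2 hP),
    fun i j => ?_⟩
  rw [← Matrix.toBilin'_single (P.transpose * M * P), ← Matrix.toBilin'_comp]
  simp

section PfisterForms

variable {F : Type} [Field F] {k : ℕ}

noncomputable def pfisterForm (a : Fin k → F) : LinearMap.BilinForm F ((Fin k → Bool) → F) :=
  Matrix.toBilin' (pfisterMatrix F a)

lemma pfisterForm_apply (a : Fin k → F) (v w : (Fin k → Bool) → F) :
    pfisterForm a v w = ∑ e, v e * w e * ∏ i, if e i then a i else 1 := by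
  simp only [pfisterForm, Matrix.toBilin'_apply', pfisterMatrix, Matrix.mulVec_diagonal,
    dotProduct]
  exact Finset.sum_congr rfl fun e _ => by ring

lemma pfisterForm_comm (a : Fin k → F) (v w : (Fin k → Bool) → F) :
    pfisterForm a v w = pfisterForm a w v := by
  simp only [pfisterForm_apply, mul_comm (v _)]

lemma twoIndependent_iff (a : Fin k → F) :
    TwoIndependent F a ↔ ∀ v, pfisterForm a v v = 0 → v = 0 := by
  simp only [TwoIndependent, pfisterForm_apply, ← sq, funext_iff, Pi.zero_apply]

theorem bilinAnisotropic_pfisterMatrix_iff (a : Fin k → F) :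
    (pfisterMatrix F a).BilinAnisotropic ↔ TwoIndependent F a := by
  simp only [twoIndependent_iff, Matrix.BilinAnisotropic, pfisterForm, Matrix.toBilin'_apply']
  exact forall_congr' fun v => by tauto

lemma TwoIndependent.ne_zero {a : Fin k → F} (h : TwoIndependent F a) (i : Fin k) :
    a i ≠ 0 := by
  intro hi
  have := (twoIndependent_iff a).1 h (Pi.single (fun j => decide (j = i)) 1)
  simp_all [pfisterForm, pfisterMatrix]

section Blocks

variable {α : Type*}

def consBlocks (v₀ v₁ : (Fin k → Bool) → α) : (Fin (k + 1) → Bool) → α :=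
  fun e => if e 0 then v₁ (Fin.tail e) else v₀ (Fin.tail e)

@[simp]
lemma consBlocks_cons (v₀ v₁ : (Fin k → Bool) → α) (s : Bool) (e : Fin k → Bool) :
    consBlocks v₀ v₁ (Fin.cons s e) = if s then v₁ e else v₀ e := by
  simp [consBlocks]

lemma exists_eq_consBlocks (v : (Fin (k + 1) → Bool) → α) :
    ∃ v₀ v₁, v = consBlocks v₀ v₁ := by
  refine ⟨fun e => v (Fin.cons false e), fun e => v (Fin.cons true e), funext fun e => ?_⟩
  rw [← Fin.cons_self_tail e]
  cases e 0 <;> simp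

@[simp]
lemma consBlocks_eq_zero_iff [Zero α] {v₀ v₁ : (Fin k → Bool) → α} :
    consBlocks v₀ v₁ = 0 ↔ v₀ = 0 ∧ v₁ = 0 := by
  simp only [funext_iff, Pi.zero_apply]
  refine ⟨fun h => ⟨fun e => by simpa using h (Fin.cons false e),
    fun e => by simpa using h (Fin.cons true e)⟩, fun h e => ?_⟩
  simp [consBlocks, h.1, h.2]

@[simp]
lemma consBlocks_add [Add α] (v₀ v₁ w₀ w₁ : (Fin k → Bool) → α) :
    consBlocks v₀ v₁ + consBlocks w₀ w₁ = consBlocks (v₀ + w₀) (v₁ + w₁) := by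
  funext e; simp only [consBlocks, Pi.add_apply]; split_ifs <;> rfl

@[simp]
lemma smul_consBlocks {R : Type*} [SMul R α] (c : R) (v₀ v₁ : (Fin k → Bool) → α) :
    c • consBlocks v₀ v₁ = consBlocks (c • v₀) (c • v₁) := by
  funext e; simp only [consBlocks, Pi.smul_apply]; split_ifs <;> rfl

end Blocks

lemma pfisterForm_cons (x : F) (a : Fin k → F) (v₀ v₁ w₀ w₁ : (Fin k → Bool) → F) :
    pfisterForm (Fin.cons x a) (consBlocks v₀ v₁) (consBlocks w₀ w₁)
      = pfisterForm a v₀ w₀ + x * pfisterForm a v₁ w₁ := by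
  simp only [pfisterForm_apply, ← (Fin.consEquiv fun _ => Bool).sum_comp,
    Fintype.sum_prod_type, Fintype.sum_bool, Finset.mul_sum, Fin.consEquiv,
    Equiv.coe_fn_mk, consBlocks_cons, Fin.prod_univ_succ, Fin.cons_zero, Fin.cons_succ,
    if_true, if_false, Bool.false_eq_true, one_mul]
  rw [add_comm]
  congr 1
  exact Finset.sum_congr rfl fun e _ => by ring

lemma TwoIndependent.eq_zero_of_cons {x : F} {a : Fin k → F}
    (h : TwoIndependent F (Fin.cons x a)) {v₀ v₁ : (Fin k → Bool) → F}
    (hv : pfisterForm a v₀ v₀ + x * pfisterForm a v₁ v₁ = 0) : v₀ = 0 ∧ v₁ = 0 :=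
  consBlocks_eq_zero_iff.1 <| (twoIndependent_iff _).1 h _ <| by rwa [pfisterForm_cons]

lemma TwoIndependent.of_cons {x : F} {a : Fin k → F} (h : TwoIndependent F (Fin.cons x a)) :
    TwoIndependent F a :=
  (twoIndependent_iff a).2 fun v hv => (h.eq_zero_of_cons (v₁ := 0) (by simp [hv])).1

section CharTwo

variable [CharP F 2]

lemma pfisterForm_add_diag (a : Fin k → F) (v w : (Fin k → Bool) → F) :
    pfisterForm a (v + w) (v + w) = pfisterForm a v v + pfisterForm a w w := by
  simp only [map_add, LinearMap.add_apply, pfisterForm_comm a w v]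
  linear_combination pfisterForm a v w * CharTwo.two_eq_zero (R := F)

variable {m : ℕ} (x y z : F) (w : Fin m → F)

def embedPair :
    ((Fin m → Bool) → F) × ((Fin m → Bool) → F) →ₗ[F] (Fin (m + 2) → Bool) → F where
  toFun XY := consBlocks (consBlocks XY.1 XY.2) (consBlocks XY.2 0)
  map_add' _ _ := by simp
  map_smul' _ _ := by simp

/-- `(y + x) * (z + x + 1)` contains the square `x ^ 2`, which is absorbed into the
coefficient `x • q₁₁`. -/
lemma pfisterForm_shear (q₀₀ q₀₁ q₁₀ q₁₁ : (Fin m → Bool) → F) :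
    pfisterForm (Fin.cons (y + x) (Fin.cons (z + x + 1) w) : Fin (m + 2) → F)
        (consBlocks (consBlocks q₀₀ q₀₁) (consBlocks q₁₀ q₁₁))
        (consBlocks (consBlocks q₀₀ q₀₁) (consBlocks q₁₀ q₁₁))
      = pfisterForm (Fin.cons y (Fin.cons z w) : Fin (m + 2) → F)
          (consBlocks (consBlocks (q₀₀ + q₀₁ + x • q₁₁) q₀₁) (consBlocks (q₁₀ + q₁₁) q₁₁))
          (consBlocks (consBlocks (q₀₀ + q₀₁ + x • q₁₁) q₀₁) (consBlocks (q₁₀ + q₁₁) q₁₁))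
        + x * pfisterForm (Fin.cons y (Fin.cons z w) : Fin (m + 2) → F)
          (consBlocks (consBlocks (q₀₁ + q₁₀ + q₁₁) q₁₁) (consBlocks q₁₁ 0))
          (consBlocks (consBlocks (q₀₁ + q₁₀ + q₁₁) q₁₁) (consBlocks q₁₁ 0)) := by
  simp only [pfisterForm_cons, pfisterForm_add_diag, map_smul, LinearMap.smul_apply, smul_eq_mul,
    map_zero]
  ring

lemma exists_embedPair_of_pfisterForm_eq
    (hu : TwoIndependent F (Fin.cons x (Fin.cons y (Fin.cons z w))))
    {p q : (Fin (m + 2) → Bool) → F}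
    (h : pfisterForm (Fin.cons y (Fin.cons z w) : Fin (m + 2) → F) p p
      = pfisterForm (Fin.cons (y + x) (Fin.cons (z + x + 1) w) : Fin (m + 2) → F) q q) :
    ∃ X Y, p = embedPair (X, Y) ∧ q = embedPair (X + Y, Y) := by
  obtain ⟨p₀, p₁, rfl⟩ := exists_eq_consBlocks p
  obtain ⟨p₀₀, p₀₁, rfl⟩ := exists_eq_consBlocks p₀
  obtain ⟨p₁₀, p₁₁, rfl⟩ := exists_eq_consBlocks p₁
  obtain ⟨q₀, q₁, rfl⟩ := exists_eq_consBlocks q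
  obtain ⟨q₀₀, q₀₁, rfl⟩ := exists_eq_consBlocks q₀
  obtain ⟨q₁₀, q₁₁, rfl⟩ := exists_eq_consBlocks q₁
  rw [pfisterForm_shear] at h
  have hblocks := hu.eq_zero_of_cons
    (v₀ := consBlocks (consBlocks p₀₀ p₀₁) (consBlocks p₁₀ p₁₁)
      + consBlocks (consBlocks (q₀₀ + q₀₁ + x • q₁₁) q₀₁) (consBlocks (q₁₀ + q₁₁) q₁₁))
    (v₁ := consBlocks (consBlocks (q₀₁ + q₁₀ + q₁₁) q₁₁) (consBlocks q₁₁ 0))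
    (by rw [pfisterForm_add_diag, add_assoc, ← h, CharTwo.add_self_eq_zero])
  simp only [consBlocks_add, consBlocks_eq_zero_iff, CharTwo.add_eq_zero] at hblocks
  obtain ⟨⟨⟨rfl, rfl⟩, rfl, rfl⟩, ⟨hq, rfl⟩, -⟩ := hblocks
  obtain rfl : q₁₀ = p₀₁ := (CharTwo.add_eq_zero.1 hq).symm
  refine ⟨q₀₀ + q₁₀, q₁₀, ?_, ?_⟩ <;> simp [embedPair, add_assoc, CharTwo.add_self_eq_zero]

lemma twoIndependent_shear (hu : TwoIndependent F (Fin.cons x (Fin.cons y (Fin.cons z w)))) :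
    TwoIndependent F (Fin.cons (y + x) (Fin.cons (z + x + 1) w) : Fin (m + 2) → F) := by
  refine (twoIndependent_iff _).2 fun q hq => ?_
  obtain ⟨X, Y, hXY, rfl⟩ := exists_embedPair_of_pfisterForm_eq x y z w hu (p := 0)
    (by rw [hq, map_zero])
  obtain ⟨rfl, rfl⟩ : X = 0 ∧ Y = 0 := by simpa [embedPair, eq_comm] using hXY
  simp [embedPair]

lemma pfisterForm_embedPair_add (X Y X' Y' : (Fin m → Bool) → F) :
    pfisterForm (Fin.cons y (Fin.cons z w) : Fin (m + 2) → F)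
        (embedPair (X, Y)) (embedPair (X', Y'))
      + pfisterForm (Fin.cons (y + x) (Fin.cons (z + x + 1) w) : Fin (m + 2) → F)
        (embedPair (X + Y, Y)) (embedPair (X' + Y', Y'))
      = pfisterForm w X Y' + pfisterForm w Y X' := by
  simp only [embedPair, LinearMap.coe_mk, AddHom.coe_mk, pfisterForm_cons, map_add,
    LinearMap.add_apply, map_zero]
  linear_combination (pfisterForm w X X' + (x + y + z + 1) * pfisterForm w Y Y')
    * CharTwo.two_eq_zero (R := F)

theorem not_linearIndependent_of_pfisterForm_eq
    (hu : TwoIndependent F (Fin.cons x (Fin.cons y (Fin.cons z w))))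
    {ι : Type*} [Fintype ι] (hcard : Fintype.card ι = 2 ^ (m + 1))
    {p q : ι → (Fin (m + 2) → Bool) → F}
    (h : ∀ i j, pfisterForm (Fin.cons y (Fin.cons z w) : Fin (m + 2) → F) (p i) (p j)
      = pfisterForm (Fin.cons (y + x) (Fin.cons (z + x + 1) w) : Fin (m + 2) → F)
          (q i) (q j)) :
    ¬ LinearIndependent F p := by
  intro hp
  -- Adding the two Gram identities leaves only the hyperbolic form `H` over `⟨⟨w⟩⟩`, which must
  -- then vanish on the basis `(X i, Y i)`; but `H ((1, 0), (0, 1)) = 1`.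
  choose X Y hpXY hqXY using fun i => exists_embedPair_of_pfisterForm_eq x y z w hu (h i i)
  let V := (Fin m → Bool) → F
  let H : LinearMap.BilinForm F (V × V) :=
    (pfisterForm w).comp (LinearMap.fst F V V) (LinearMap.snd F V V)
      + (pfisterForm w).comp (LinearMap.snd F V V) (LinearMap.fst F V V)
  have hXY : LinearIndependent F fun i => (X i, Y i) :=
    LinearIndependent.of_comp embedPair (by simpa [Function.comp_def, ← hpXY] using hp)
  have hH : H = 0 := by
    refine LinearMap.BilinForm.eq_zero_of_linearIndependent hXY ?_ fun i j => ?_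
    · simp [V, hcard, Module.finrank_prod, pow_succ, mul_two]
    · have hsum := pfisterForm_embedPair_add x y z w (X i) (Y i) (X j) (Y j)
      rw [← hpXY, ← hpXY, ← hqXY, ← hqXY, h, CharTwo.add_self_eq_zero] at hsum
      simp [H, hsum]
  have hone := congr(($hH) (Pi.single (fun _ => false) 1, 0) (0, Pi.single (fun _ => false) 1))
  simp [H, pfisterForm, pfisterMatrix] at hone

end CharTwo

lemma pfisterMatrix_snoc_false (c : Fin k → F) (d : F) (i j : Fin k → Bool) :
    pfisterMatrix F (Fin.snoc c d) (Fin.snoc i false) (Fin.snoc j false)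
      = pfisterMatrix F c i j := by
  simp [pfisterMatrix, Matrix.diagonal_apply, Fin.prod_univ_castSucc, Fin.snoc_inj]

end PfisterForms

/-- Let `F` be a field of characteristic `2` and `n = m+2 ≥ 2`. If the
`2`-rank of `F` is at least `n+1`, i.e. `[F : F²] ≥ 2^{n+1}` (expressed by the existence
of an `(n+1)`-tuple whose `2^{n+1}` monomials are `F²`-linearly independent), then `IⁿF`
is not linked: there are two anisotropic bilinear `n`-fold Pfister forms over `F` with no
common `(n-1)`-fold Pfister factor. -/
theorem bilinPfister_not_linked_of_large_two_rank (F : Type) [Field F] [CharP F 2]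
    (m : ℕ) (hrank : ∃ u : Fin (m + 3) → F, TwoIndependent F u) :
    ∃ a b : Fin (m + 2) → F, (∀ i, a i ≠ 0) ∧ (∀ i, b i ≠ 0) ∧
      (pfisterMatrix F a).BilinAnisotropic ∧ (pfisterMatrix F b).BilinAnisotropic ∧
      ¬ ∃ c : Fin (m + 1) → F, (∀ i, c i ≠ 0) ∧
          ∃ d e : F, d ≠ 0 ∧ e ≠ 0 ∧
            Matrix.BilinIsometric (pfisterMatrix F a) (pfisterMatrix F (Fin.snoc c d)) ∧
            Matrix.BilinIsometric (pfisterMatrix F b) (pfisterMatrix F (Fin.snoc c e)) := by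
  obtain ⟨u, hu⟩ := hrank
  obtain ⟨x, y, z, w, rfl⟩ : ∃ x y z w, u = Fin.cons x (Fin.cons y (Fin.cons z w)) :=
    ⟨u 0, Fin.tail u 0, Fin.tail (Fin.tail u) 0, Fin.tail (Fin.tail (Fin.tail u)),
      by simp only [Fin.cons_self_tail]⟩
  have ha := hu.of_cons
  have hb := twoIndependent_shear x y z w hu
  refine ⟨_, _, ha.ne_zero, hb.ne_zero,
    (bilinAnisotropic_pfisterMatrix_iff _).2 ha, (bilinAnisotropic_pfisterMatrix_iff _).2 hb, ?_⟩
  rintro ⟨c, -, d, e, -, -, hd, he⟩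
  obtain ⟨p, hp, hpd⟩ := hd.exists_linearIndependent
  obtain ⟨q, -, hqe⟩ := he.exists_linearIndependent
  refine not_linearIndependent_of_pfisterForm_eq x y z w hu (by simp)
    (p := fun i => p (Fin.snoc i false)) (q := fun i => q (Fin.snoc i false))
    (fun i j => ?_) (hp.comp _ fun i j hij => (Fin.snoc_inj.1 hij).1)
  simp only [pfisterForm, hpd, hqe, pfisterMatrix_snoc_false]
end
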